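/- Let F be a field of characteristic p > 2 and G ≅ ⟨Q_8, g⟩ × E × P, where Q_8 = ⟨x, y : x^4 = 1, x^2 = y^2, x^y = x^{-1}⟩, E is an elementary abelian 2-group (E^2 = 1), P is a finite p-group, g commutes with x and y, g^2 = x^2, and the orientation σ has kernel N = Q_8 × E × P. Then the symmetric elements under the oriented classical involution satisfy (FG)^+ ⊆ FG·Δ(P) + ζ(FG), where ζ(FG) is the center of FG. -/

import Mathlib

/-!
Let `c` be the image of a symmetric `α` under the projection `Q × E × P → Q × E` that kills `P`.
Then `α - c ∈ FG·Δ(P)`, since `w h - w = w (h - 1)`, and `c` is again symmetric, so it remains to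
show that the coefficients of `c` are constant on conjugacy classes. Modulo the central subgroup
`⟨x²⟩` the group `⟨Q₈, g⟩` is abelian, so every conjugate of `q` is `q` or `x² q`. A noncentral `q`
either has `σ q = 1` and `q² = x²`, so that `x² q = q⁻¹` and symmetry `c_q = σ(q) c_{q⁻¹}` gives
`c_{x² q} = c_q`; or `σ q = -1` and `q² = 1`, so that `c_q = -c_q = 0` as `char F ≠ 2`. The factor
`E` is central, and `c` vanishes off `Q × E × 1`.
-/

/-- The oriented classical involution of the group algebra `FG` attached to an
orientation `σ : G → {±1}`: `(Σ α_g g)^* = Σ α_g σ(g) g⁻¹`. -/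
noncomputable def orInv {F : Type*} [Field F] {G : Type*} [Group G] (σ : G →* ℤˣ)
    (α : MonoidAlgebra F G) : MonoidAlgebra F G :=
  MonoidAlgebra.ofCoeff (α.coeff.sum fun g a => Finsupp.single g⁻¹ (((σ g : ℤ) : F) * a))

namespace Subgroup

variable {G M : Type*} [Group G] [Group M]

theorem commute_map_of_closure_eq_top {S : Set G} (hS : closure S = ⊤) (f : G →* M) {m : M}
    (h : ∀ s ∈ S, Commute m (f s)) (a : G) : Commute m (f a) := by
  have hle : closure S ≤ (centralizer {m}).comap f :=
    (closure_le _).2 fun s hs => mem_centralizer_singleton_iff.2 (h s hs).eq.symm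
  exact (mem_centralizer_singleton_iff.1 (hle (hS ▸ mem_top a))).symm

theorem conj_eq_or_eq_mul_of_closure_eq_top {S : Set G} (hS : closure S = ⊤) {z : G}
    (hz : ∀ a, Commute z a) (hz2 : z ^ 2 = 1)
    (hSz : ∀ s ∈ S, ∀ t ∈ S, t * s * t⁻¹ = s ∨ t * s * t⁻¹ = z * s) (a q : G) :
    a * q * a⁻¹ = q ∨ a * q * a⁻¹ = z * q := by
  let N := zpowers z
  have : N.Normal := ⟨fun n hn b => by
    obtain ⟨k, rfl⟩ := mem_zpowers_iff.1 hn
    rw [((hz b).zpow_left k).symm.eq, mul_inv_cancel_right]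
    exact zpow_mem (mem_zpowers z) k⟩
  -- `G ⧸ ⟨z⟩` is commutative, being generated by the pairwise commuting images of `S`.
  let π := QuotientGroup.mk' N
  have hπS : ∀ s ∈ S, ∀ t ∈ S, Commute (π t) (π s) := by
    intro s hs t ht
    have : π (t * s * t⁻¹) = π s := by
      rcases hSz s hs t ht with h | h
      · rw [h]
      · rw [h, map_mul, QuotientGroup.mk'_apply, (QuotientGroup.eq_one_iff z).2 (mem_zpowers z),
          one_mul]
    rwa [map_mul, map_mul, map_inv, mul_inv_eq_iff_eq_mul] at this
  have hπS' (t : G) (ht : t ∈ S) (q : G) : Commute (π t) (π q) :=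
    commute_map_of_closure_eq_top hS π (fun s hs => hπS s hs t ht) q
  have hπ : Commute (π a) (π q) :=
    (commute_map_of_closure_eq_top hS π (fun t ht => (hπS' t ht q).symm) a).symm
  obtain ⟨k, hk⟩ := mem_zpowers_iff.1 <| (QuotientGroup.eq (s := N)).1 <|
    show π q = π (a * q * a⁻¹) by rw [map_mul, map_mul, map_inv, hπ.eq, mul_inv_cancel_right]
  rw [zpow_eq_zpow_emod k (n := 2) (mod_cast hz2), eq_inv_mul_iff_mul_eq] at hk
  rcases Int.emod_two_eq_zero_or_one k with h | h <;> rw [h] at hk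
  · left; simpa using hk.symm
  · right; rw [← hk, zpow_one, (hz q).eq]

end Subgroup

namespace MonoidAlgebra

variable {k G : Type*} [Group G]

theorem mem_center_of_coeff_conj [CommSemiring k] {α : MonoidAlgebra k G}
    (h : ∀ u w, α.coeff (u * w * u⁻¹) = α.coeff w) :
    α ∈ Subsemiring.center (MonoidAlgebra k G) := by
  rw [Subsemiring.mem_center_iff]
  intro β
  induction β using MonoidAlgebra.induction_linear with
  | zero => simp
  | add β₁ β₂ h₁ h₂ => rw [add_mul, mul_add, h₁, h₂]
  | single u a =>
    ext v
    rw [coeff_single_mul_apply, coeff_mul_single_apply, ← h u (u⁻¹ * v), mul_inv_cancel_left,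
      mul_comm]

theorem sub_mapDomain_mem_mul_span [CommRing k] {ι : Type*} (v : ι → G) (f : G → G)
    (hf : ∀ w, ∃ i, w = f w * v i) (α : MonoidAlgebra k G) :
    α - mapDomain f α ∈ (⊤ : Submodule k (MonoidAlgebra k G)) *
      Submodule.span k {z | ∃ i, z = of k G (v i) - 1} := by
  induction α using MonoidAlgebra.induction_linear with
  | zero => simp
  | add α β hα hβ =>
    rw [mapDomain_add, add_sub_add_comm]
    exact add_mem hα hβ
  | single w a =>
    obtain ⟨i, hi⟩ := hf w
    have : single w a - mapDomain f (single w a) = single (f w) a * (of k G (v i) - 1) := by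
      rw [mapDomain_single, mul_sub, mul_one, of_apply, single_mul_single, mul_one, ← hi]
    rw [this]
    exact Submodule.mul_mem_mul Submodule.mem_top (Submodule.subset_span ⟨i, rfl⟩)

end MonoidAlgebra

section OrientedInvolution

variable {F G : Type*} [Field F] [Group G] (σ : G →* ℤˣ)

open MonoidAlgebra

theorem orInv_zero : orInv σ (0 : MonoidAlgebra F G) = 0 := by
  simp [orInv]

theorem orInv_add (α β : MonoidAlgebra F G) : orInv σ (α + β) = orInv σ α + orInv σ β := by
  classical
  simp only [orInv, coeff_add]
  rw [Finsupp.sum_add_index' (by simp) (by simp [mul_add])]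
  rfl

theorem orInv_single (w : G) (a : F) :
    orInv σ (single w a) = single w⁻¹ (((σ w : ℤ) : F) * a) := by
  rw [orInv, coeff_single, Finsupp.sum_single_index (by simp), ofCoeff_single]

theorem coeff_orInv (α : MonoidAlgebra F G) (w : G) :
    (orInv σ α).coeff w = ((σ w : ℤ) : F) * α.coeff w⁻¹ := by
  classical
  simp only [orInv, coeff_ofCoeff, Finsupp.sum_apply, Finsupp.single_apply, inv_eq_iff_eq_inv]
  rw [Finsupp.sum_eq_single w⁻¹ (fun _ _ h => if_neg h) (by simp)]
  simp

theorem orInv_mapDomain {H : Type*} [Group H] (τ : H →* ℤˣ) (f : G →* H)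
    (hf : ∀ w, τ (f w) = σ w) (α : MonoidAlgebra F G) :
    orInv τ (mapDomain f α) = mapDomain f (orInv σ α) := by
  induction α using MonoidAlgebra.induction_linear with
  | zero => simp [orInv_zero]
  | add α β hα hβ => rw [mapDomain_add, orInv_add, orInv_add, mapDomain_add, hα, hβ]
  | single w a => rw [mapDomain_single, orInv_single, orInv_single, mapDomain_single, map_inv, hf]

variable {σ}

theorem coeff_eq_of_orInv_eq {α : MonoidAlgebra F G} (hα : orInv σ α = α) (w : G) :
    α.coeff w = ((σ w : ℤ) : F) * α.coeff w⁻¹ := by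
  rw [← coeff_orInv, hα]

theorem coeff_eq_zero_of_orInv_eq {α : MonoidAlgebra F G} (hα : orInv σ α = α)
    (h2 : (2 : F) ≠ 0) {w : G} (hσw : σ w = -1) (hw : w ^ 2 = 1) : α.coeff w = 0 := by
  have h := coeff_eq_of_orInv_eq hα w
  rw [inv_eq_of_mul_eq_one_left (by rw [← pow_two, hw]), hσw] at h
  refine (mul_eq_zero.1 ?_).resolve_left h2
  push_cast at h
  linear_combination h

/-- The three ways in which conjugation by `u` can move `w` without changing the coefficient of
`w` in an element of `FG` fixed by the oriented involution. -/
def ConjCompatible (σ : G →* ℤˣ) (u w : G) : Prop :=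
  u * w * u⁻¹ = w ∨ (σ w = 1 ∧ u * w * u⁻¹ = w⁻¹) ∨ (σ w = -1 ∧ w ^ 2 = 1)

theorem coeff_conj_eq_of_orInv_eq {α : MonoidAlgebra F G} (hα : orInv σ α = α)
    (h2 : (2 : F) ≠ 0) {u w : G} (huw : ConjCompatible σ u w) :
    α.coeff (u * w * u⁻¹) = α.coeff w := by
  rcases huw with h | ⟨hσw, h⟩ | ⟨hσw, hw⟩
  · rw [h]
  · rw [h, coeff_eq_of_orInv_eq hα w, hσw, Units.val_one, Int.cast_one, one_mul]
  · have hσ : σ (u * w * u⁻¹) = -1 := by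
      rw [map_mul, map_mul, map_inv, mul_inv_cancel_comm, hσw]
    rw [coeff_eq_zero_of_orInv_eq hα h2 hσw hw,
      coeff_eq_zero_of_orInv_eq hα h2 hσ (by rw [conj_pow, hw, mul_one, mul_inv_cancel])]

end OrientedInvolution

structure QuaternionCentralGens {Q : Type*} [Group Q] (x y g : Q) : Prop where
  pow_four : x ^ 4 = 1
  sq_y : y ^ 2 = x ^ 2
  conj_y : y⁻¹ * x * y = x⁻¹
  comm_x : g * x = x * g
  comm_y : g * y = y * g
  sq_g : g ^ 2 = x ^ 2
  closure_eq_top : Subgroup.closure {x, y, g} = ⊤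

namespace QuaternionCentralGens

variable {Q : Type*} [Group Q] {x y g : Q}

theorem commute_g (h : QuaternionCentralGens x y g) (q : Q) : Commute g q :=
  Subgroup.commute_map_of_closure_eq_top h.closure_eq_top (MonoidHom.id Q)
    (by rintro s (rfl | rfl | rfl) <;> simp [Commute, SemiconjBy, h.comm_x, h.comm_y]) q

theorem conj_x (h : QuaternionCentralGens x y g) : y * x * y⁻¹ = x⁻¹ := by
  simpa [mul_assoc] using (congrArg (fun t => y * t⁻¹ * y⁻¹) h.conj_y).symm

theorem inv_x (h : QuaternionCentralGens x y g) : x⁻¹ = x ^ 3 :=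
  inv_eq_of_mul_eq_one_left (by rw [← pow_succ, h.pow_four])

theorem sq_sq_x (h : QuaternionCentralGens x y g) : (x ^ 2) ^ 2 = 1 := by rw [← pow_mul, h.pow_four]

theorem inv_sq_x (h : QuaternionCentralGens x y g) : (x ^ 2)⁻¹ = x ^ 2 :=
  inv_eq_of_mul_eq_one_left (by rw [← pow_two, h.sq_sq_x])

theorem commute_sq_x (h : QuaternionCentralGens x y g) (q : Q) : Commute (x ^ 2) q := by
  refine Subgroup.commute_map_of_closure_eq_top h.closure_eq_top (MonoidHom.id Q) ?_ q
  rintro s (hs | hs | hs) <;> rw [hs, MonoidHom.id_apply]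
  · exact (Commute.refl x).pow_left 2
  · refine (mul_inv_eq_iff_eq_mul.1 ?_).symm
    rw [← conj_pow, h.conj_x, inv_pow, h.inv_sq_x]
  · exact (h.commute_g _).symm

theorem conj_x_y (h : QuaternionCentralGens x y g) : x * y * x⁻¹ = x ^ 2 * y := by
  have hxy : x * y = y * x⁻¹ := by rw [← h.conj_y]; group
  rw [hxy, mul_assoc, ← pow_two, inv_pow, h.inv_sq_x]
  exact (h.commute_sq_x y).symm.eq

theorem conj_eq_or_eq_sq_mul (h : QuaternionCentralGens x y g) (a q : Q) :
    a * q * a⁻¹ = q ∨ a * q * a⁻¹ = x ^ 2 * q := by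
  refine Subgroup.conj_eq_or_eq_mul_of_closure_eq_top h.closure_eq_top h.commute_sq_x h.sq_sq_x
    ?_ a q
  rintro s (hs | hs | hs) t (ht | ht | ht) <;> rw [hs, ht]
  all_goals try first
    | exact Or.inl (Commute.refl _).mul_inv_cancel
    | exact Or.inl (h.commute_g _).mul_inv_cancel
    | exact Or.inl (h.commute_g _).symm.mul_inv_cancel
  · exact Or.inr (by rw [h.conj_x, h.inv_x, pow_succ])
  · exact Or.inr h.conj_x_y

theorem y_mul_pow_x (h : QuaternionCentralGens x y g) (i : ℕ) : y * x ^ i = x ^ (3 * i) * y := by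
  rw [← mul_inv_eq_iff_eq_mul, ← conj_pow, h.conj_x, h.inv_x, pow_mul]

theorem inv_eq_pow_three_of_mem (h : QuaternionCentralGens x y g) {s : Q}
    (hs : s ∈ ({x, y, g} : Set Q)) : s⁻¹ = s * s * s := by
  have h4 : s ^ 4 = 1 := by
    rcases hs with rfl | rfl | rfl
    · exact h.pow_four
    · rw [show 4 = 2 * 2 from rfl, pow_mul, h.sq_y, h.sq_sq_x]
    · rw [show 4 = 2 * 2 from rfl, pow_mul, h.sq_g, h.sq_sq_x]
  exact inv_eq_of_mul_eq_one_left (by rw [← h4, pow_succ, pow_succ, pow_two])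

theorem exists_normal_form (h : QuaternionCentralGens x y g) (q : Q) :
    ∃ i k : ℕ, q = x ^ i * g ^ k ∨ q = x ^ i * y * g ^ k := by
  have step : ∀ s ∈ ({x, y, g} : Set Q), ∀ w : Q,
      (∃ i k : ℕ, w = x ^ i * g ^ k ∨ w = x ^ i * y * g ^ k) →
      ∃ i k : ℕ, s * w = x ^ i * g ^ k ∨ s * w = x ^ i * y * g ^ k := by
    rintro s (hs | hs | hs) w ⟨i, k, hw | hw⟩ <;> rw [hs, hw]
    · exact ⟨i + 1, k, Or.inl (by rw [← mul_assoc, ← pow_succ'])⟩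
    · exact ⟨i + 1, k, Or.inr (by simp only [← mul_assoc, ← pow_succ'])⟩
    · exact ⟨3 * i, k, Or.inr (by rw [← mul_assoc, h.y_mul_pow_x])⟩
    · refine ⟨3 * i + 2, k, Or.inl ?_⟩
      rw [← mul_assoc, ← mul_assoc, h.y_mul_pow_x, mul_assoc _ y y, ← pow_two, h.sq_y, ← pow_add]
    · exact ⟨i, k + 1, Or.inl (by rw [← mul_assoc, (h.commute_g _).eq, mul_assoc, ← pow_succ'])⟩
    · exact ⟨i, k + 1, Or.inr (by rw [← mul_assoc, (h.commute_g _).eq, mul_assoc, ← pow_succ'])⟩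
  induction h.closure_eq_top ▸ Subgroup.mem_top q using Subgroup.closure_induction_left with
  | one => exact ⟨0, 0, Or.inl (by simp)⟩
  | mul_left s hs w _ hw => exact step s hs w hw
  | inv_mul_cancel s hs w _ hw =>
    rw [h.inv_eq_pow_three_of_mem hs, mul_assoc, mul_assoc]
    exact step s hs _ (step s hs _ (step s hs w hw))

theorem sign_sq_of_odd (h : QuaternionCentralGens x y g) {σ : Q →* ℤˣ} {q : Q} {n k : ℕ}
    (hσq : σ q = (-1) ^ k) (hq : q ^ 2 = (x ^ 2) ^ n) (hnk : Odd (n + k)) :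
    (σ q = 1 ∧ q ^ 2 = x ^ 2) ∨ (σ q = -1 ∧ q ^ 2 = 1) := by
  rcases Nat.even_or_odd k with hk | hk
  · obtain ⟨m, rfl⟩ := (Nat.odd_add.1 hnk).2 hk
    left
    rw [hσq, hq, hk.neg_one_pow, pow_succ, pow_mul, h.sq_sq_x, one_pow, one_mul]
    exact ⟨rfl, rfl⟩
  · obtain ⟨m, rfl⟩ := (Nat.odd_add'.1 hnk).1 hk
    right
    rw [hσq, hq, hk.neg_one_pow, ← two_mul, pow_mul, h.sq_sq_x, one_pow]
    exact ⟨rfl, rfl⟩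

theorem mem_center_or_sign_sq (h : QuaternionCentralGens x y g) {σ : Q →* ℤˣ} (hσx : σ x = 1)
    (hσy : σ y = 1) (hσg : σ g = -1) (q : Q) :
    q ∈ Subgroup.center Q ∨ (σ q = 1 ∧ q ^ 2 = x ^ 2) ∨ (σ q = -1 ∧ q ^ 2 = 1) := by
  have hgk (k : ℕ) : (g ^ k) ^ 2 = (x ^ 2) ^ k := by rw [← pow_mul, mul_comm, pow_mul, h.sq_g]
  obtain ⟨i, k, rfl | rfl⟩ := h.exists_normal_form q
  · rcases Nat.even_or_odd' i with ⟨m, rfl | rfl⟩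
    · left
      rw [pow_mul]
      exact mul_mem (pow_mem (Subgroup.mem_center_iff.2 fun q => (h.commute_sq_x q).eq.symm) m)
        (pow_mem (Subgroup.mem_center_iff.2 fun q => (h.commute_g q).eq.symm) k)
    · right
      refine h.sign_sq_of_odd (n := 2 * m + 1 + k) (k := k) (by simp [hσx, hσg]) ?_ ⟨m + k, by ring⟩
      rw [((h.commute_g x).pow_pow k _).symm.mul_pow, hgk, pow_right_comm, ← pow_add]
  · right
    have hxy : (x ^ i * y) ^ 2 = x ^ 2 := by
      rw [pow_two, mul_assoc, ← mul_assoc y, h.y_mul_pow_x, ← mul_assoc, ← mul_assoc, ← pow_add,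
        mul_assoc, ← pow_two, h.sq_y, show i + 3 * i = 4 * i by ring, pow_mul, h.pow_four, one_pow,
        one_mul]
    refine h.sign_sq_of_odd (n := k + 1) (k := k) (by simp [hσx, hσy, hσg]) ?_ ⟨k, by ring⟩
    rw [((h.commute_g _).pow_left k).symm.mul_pow, hxy, hgk, ← pow_succ']

theorem conjCompatible (h : QuaternionCentralGens x y g) {σ : Q →* ℤˣ} (hσx : σ x = 1)
    (hσy : σ y = 1) (hσg : σ g = -1) (a q : Q) : ConjCompatible σ a q := by
  rcases h.mem_center_or_sign_sq hσx hσy hσg q with hq | ⟨hσq, hq2⟩ | hq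
  · exact Or.inl (by rw [Subgroup.mem_center_iff.1 hq a, mul_inv_cancel_right])
  · refine (h.conj_eq_or_eq_sq_mul a q).imp_right fun hc => Or.inl ⟨hσq, hc.trans ?_⟩
    refine eq_inv_of_mul_eq_one_left ?_
    rw [mul_assoc, ← pow_two, hq2, ← pow_two, h.sq_sq_x]
  · exact Or.inr (Or.inr hq)

end QuaternionCentralGens

theorem ConjCompatible.prod_mk {Q E P : Type*} [Group Q] [Group E] [Group P]
    (hE : ∀ e : E, e ^ 2 = 1) {σ : Q × E × P →* ℤˣ} (hσE : ∀ e : E, σ (1, e, 1) = 1)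
    {u : Q × E × P} {q : Q} (h : ConjCompatible (σ.comp (MonoidHom.inl Q (E × P))) u.1 q)
    (e : E) : ConjCompatible σ u (q, e, 1) := by
  have hinv (e : E) : e⁻¹ = e := inv_eq_of_mul_eq_one_left (by rw [← pow_two, hE])
  have hconj : u * (q, e, 1) * u⁻¹ = (u.1 * q * u.1⁻¹, e, 1) := by
    refine Prod.ext rfl (Prod.ext ?_ (by simp))
    calc u.2.1 * e * u.2.1⁻¹ = e⁻¹ := by
          rw [hinv u.2.1]
          refine eq_inv_of_mul_eq_one_left ?_
          rw [mul_assoc, ← pow_two, hE]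
      _ = e := hinv e
  have hσ : σ (q, e, 1) = σ (q, 1, 1) := by
    rw [show ((q, e, 1) : Q × E × P) = (q, 1, 1) * (1, e, 1) by simp, map_mul, hσE, mul_one]
  rcases h with h | ⟨hσq, h⟩ | ⟨hσq, h⟩
  · exact Or.inl (by rw [hconj, h])
  · exact Or.inr (Or.inl ⟨hσ.trans hσq, by rw [hconj, h]; simp [hinv]⟩)
  · exact Or.inr (Or.inr ⟨hσ.trans hσq, by ext <;> simp [h, hE]⟩)

theorem mem_center_of_orInv_eq {Q E P : Type*} [Group Q] [Group E] [Group P] {F : Type*} [Field F]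
    (h2 : (2 : F) ≠ 0) (hE : ∀ e : E, e ^ 2 = 1) {σ : Q × E × P →* ℤˣ}
    (hσE : ∀ e : E, σ (1, e, 1) = 1)
    (hQ : ∀ a q : Q, ConjCompatible (σ.comp (MonoidHom.inl Q (E × P))) a q)
    {c : MonoidAlgebra F (Q × E × P)} (hc : orInv σ c = c)
    (hc0 : ∀ w : Q × E × P, w.2.2 ≠ 1 → c.coeff w = 0) :
    c ∈ Subsemiring.center (MonoidAlgebra F (Q × E × P)) := by
  refine MonoidAlgebra.mem_center_of_coeff_conj fun u ⟨q, e, h⟩ => ?_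
  by_cases hh : h = 1
  · subst hh
    exact coeff_conj_eq_of_orInv_eq hc h2 (ConjCompatible.prod_mk hE hσE (hQ u.1 q) e)
  · rw [hc0 (q, e, h) hh, hc0 (u * (q, e, h) * u⁻¹) (by simpa using hh)]

theorem stmt_12_general {F : Type*} [Field F] {p : ℕ} (hp : 2 < p) [CharP F p]
    {Q E P : Type*} [Group Q] [Group E] [Group P]
    (hE : ∀ e : E, e ^ 2 = 1)
    (x y g : Q) (hx4 : x ^ 4 = 1) (hy2 : y ^ 2 = x ^ 2)
    (hxy : y⁻¹ * x * y = x⁻¹) (hgx : g * x = x * g) (hgy : g * y = y * g)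
    (hg2 : g ^ 2 = x ^ 2)
    (hgen : Subgroup.closure {x, y, g} = (⊤ : Subgroup Q))
    (σ : (Q × E × P) →* ℤˣ)
    (hσx : σ (x, 1, 1) = 1) (hσy : σ (y, 1, 1) = 1) (hσg : σ (g, 1, 1) = -1)
    (hσE : ∀ e : E, σ (1, e, 1) = 1) (hσP : ∀ h : P, σ (1, 1, h) = 1) :
    ∀ α ∈ {α : MonoidAlgebra F (Q × E × P) | orInv σ α = α},
      ∃ β ∈ ((⊤ : Submodule F (MonoidAlgebra F (Q × E × P))) *
          Submodule.span F {z : MonoidAlgebra F (Q × E × P) |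
            ∃ h : P, z = MonoidAlgebra.of F (Q × E × P) (1, 1, h) - 1}),
        ∃ c ∈ Subring.center (MonoidAlgebra F (Q × E × P)), α = β + c := by
  intro α hα
  have h2 : (2 : F) ≠ 0 := by
    exact_mod_cast (CharP.cast_eq_zero_iff F p 2).not.2 (Nat.not_dvd_of_pos_of_lt two_pos hp)
  have hQ : QuaternionCentralGens x y g := ⟨hx4, hy2, hxy, hgx, hgy, hg2, hgen⟩
  let π : Q × E × P →* Q × E × P :=
    (MonoidHom.id Q).prodMap ((MonoidHom.inl E P).comp (MonoidHom.fst E P))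
  have hσπ (w : Q × E × P) : σ (π w) = σ w := by
    obtain ⟨q, e, h⟩ := w
    show σ (q, e, 1) = σ (q, e, h)
    rw [show ((q, e, h) : Q × E × P) = (q, e, 1) * (1, 1, h) by simp, map_mul, hσP, mul_one]
  set c := MonoidAlgebra.mapDomain π α
  have hc : orInv σ c = c := by rw [orInv_mapDomain σ σ π hσπ, hα]
  refine ⟨α - c, MonoidAlgebra.sub_mapDomain_mem_mul_span (fun h : P => (1, 1, h)) π
    (fun w => ⟨w.2.2, by ext <;> simp [π]⟩) α, c, ?_, by abel⟩
  exact mem_center_of_orInv_eq h2 hE hσE (hQ.conjCompatible hσx hσy hσg) hc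
    fun w hw => Finsupp.mapDomain_of_notMem_range _ _ (by rintro ⟨v, rfl⟩; exact hw rfl)

/-- Let `char F = p > 2` and `G ≅ ⟨Q₈, g⟩ × E × P`, where `⟨x,y⟩ ≅ Q₈`, `E` is an
elementary abelian `2`-group, `P` is a finite `p`-group, `g` commutes with `x, y`,
`g² = x²`, and the orientation `σ` has kernel `N = Q₈ × E × P` (i.e. `σ` is trivial
on `x, y, E, P` and `σ(g) = -1`). Then `(FG)^+ ⊆ FG·Δ(P) + ζ(FG)`. -/
theorem stmt_12 {F : Type*} [Field F] {p : ℕ} (hp : 2 < p) [CharP F p]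
    {Q E P : Type*} [Group Q] [Group E] [Group P] [Finite P]
    (hPp : IsPGroup p P) (hE : ∀ e : E, e ^ 2 = 1)
    (x y g : Q) (hx4 : x ^ 4 = 1) (hx2 : x ^ 2 ≠ 1) (hy2 : y ^ 2 = x ^ 2)
    (hxy : y⁻¹ * x * y = x⁻¹) (hgx : g * x = x * g) (hgy : g * y = y * g)
    (hg2 : g ^ 2 = x ^ 2)
    (hgen : Subgroup.closure {x, y, g} = (⊤ : Subgroup Q))
    (σ : (Q × E × P) →* ℤˣ)
    (hσx : σ (x, 1, 1) = 1) (hσy : σ (y, 1, 1) = 1) (hσg : σ (g, 1, 1) = -1)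
    (hσE : ∀ e : E, σ (1, e, 1) = 1) (hσP : ∀ h : P, σ (1, 1, h) = 1) :
    ∀ α ∈ {α : MonoidAlgebra F (Q × E × P) | orInv σ α = α},
      ∃ β ∈ ((⊤ : Submodule F (MonoidAlgebra F (Q × E × P))) *
          Submodule.span F {z : MonoidAlgebra F (Q × E × P) |
            ∃ h : P, z = MonoidAlgebra.of F (Q × E × P) (1, 1, h) - 1}),
        ∃ c ∈ Subring.center (MonoidAlgebra F (Q × E × P)), α = β + c :=
  stmt_12_general hp hE x y g hx4 hy2 hxy hgx hgy hg2 hgen σ hσx hσy hσg hσE hσP
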